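/- arXiv:1007.4680 — 4 statements merged into one kernel-verified Lean document; each statement's English description precedes it below -/
import Mathlib

section
/- Let i, j, k, r, s, t be nonnegative integers with i + j + k even, i + k ≥ j, j + k ≥ i, i + j ≥ k, and t + (i + j − k)/2 = r + s. Set z = (i + j − k)/2, x = (i + k − j)/2, y = (j + k − i)/2. Then the signed count of oriented arrangements satisfies Arr^{i,j,k}_{r,s,t} = (−1)^{(i+j+k)/2 + r + s} · ∑_{a=0}^{z} (−1)^{a} C(z, a) · C(x, r − a) · C(y, j − s − a), where C(·,·) is the ordinary binomial coefficient (equal to 0 when the lower entry is negative or exceeds the upper). -/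
open Finset

/-- Binomial coefficient `C(n, k)` with an integer lower entry, equal to `0` when the
lower entry is negative (or exceeds the upper entry). -/
def zchoose (n : ℕ) (k : ℤ) : ℤ :=
  if 0 ≤ k then (n.choose k.toNat : ℤ) else 0

/-- An oriented line arrangement for an `(i,j,k)`-triangle with `z` arcs joining side `I`
to side `J`, `x` arcs joining side `I` to side `K` and `y` arcs joining side `J` to side
`K` is an assignment of a direction (a `Bool`) to each arc: for the `z` arcs, `true`
means directed `I → J`; for the `x` arcs, `true` means directed `I → K`; for the `y`
arcs, `true` means directed `J → K`. -/
abbrev OrientedArrangement (z x y : ℕ) : Type :=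
  (Fin z → Bool) × (Fin x → Bool) × (Fin y → Bool)

/-- `Arr z x y r s t` is the sum of the signs `(-1)^N` (where `N` is the number of arcs
directed `I → J`, `K → I` or `K → J`) over all oriented arrangements such that:
`r` arcs point away from side `I`, `s` arcs point away from side `J`, and `t` arcs
point towards side `K`. -/
def Arr (z x y r s t : ℕ) : ℤ :=
  ∑ o : OrientedArrangement z x y,
    if ((univ.filter fun i => o.1 i = true).card
          + (univ.filter fun i => o.2.1 i = true).card = r)
        ∧ ((univ.filter fun i => o.1 i = false).card
          + (univ.filter fun i => o.2.2 i = true).card = s)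
        ∧ ((univ.filter fun i => o.2.1 i = true).card
          + (univ.filter fun i => o.2.2 i = true).card = t) then
      (-1 : ℤ) ^ ((univ.filter fun i => o.1 i = true).card
          + (univ.filter fun i => o.2.1 i = false).card
          + (univ.filter fun i => o.2.2 i = false).card)
    else 0
/-! The count of arcs directed one way determines the count directed the other way, so `Arr`
is a sum over the three numbers `a`, `b`, `c` of `I → J`, `I → K` and `J → K` arcs, each value
occurring `C(z,a) C(x,b) C(y,c)` times. The constraints on `r` and `s` pin `b = r - a` and
`c = s + a - z` (the one on `t` is then automatic), which leaves a single sum over `a`; the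
factor `C(y, s + a - z)` becomes `C(y, j - s - a)` by the symmetry of binomial coefficients. -/

lemma zchoose_eq_zero {n : ℕ} {k : ℤ} (hk : k < 0 ∨ n < k) : zchoose n k = 0 := by
  unfold zchoose
  split_ifs with h0
  · exact_mod_cast Nat.choose_eq_zero_of_lt (by omega)
  · rfl

lemma zchoose_symm (n : ℕ) (k : ℤ) : zchoose n (n - k) = zchoose n k := by
  by_cases hk : 0 ≤ k ∧ k ≤ n
  · obtain ⟨m, rfl⟩ := Int.eq_ofNat_of_zero_le hk.1
    have hm : m ≤ n := by omega
    rw [show (n : ℤ) - m = ((n - m : ℕ) : ℤ) by omega]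
    simp only [zchoose, Nat.cast_nonneg, if_true, Int.toNat_natCast, Nat.choose_symm hm]
  · rw [zchoose_eq_zero (by omega), zchoose_eq_zero (by omega)]

lemma sum_range_ite_cast_eq_zchoose (n : ℕ) (k : ℤ) :
    ∑ b ∈ range (n + 1), (if (b : ℤ) = k then (n.choose b : ℤ) else 0) = zchoose n k := by
  by_cases hk : 0 ≤ k ∧ k ≤ n
  · have hmem : k.toNat ∈ range (n + 1) := mem_range.mpr (by omega)
    rw [Finset.sum_eq_single_of_mem k.toNat hmem fun b _ hb => if_neg (by omega),
      if_pos (by omega), zchoose, if_pos hk.1]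
  · rw [zchoose_eq_zero (by omega)]
    exact Finset.sum_eq_zero fun b hb => if_neg (by rw [mem_range] at hb; omega)

def boolFunEquivFinset (α : Type*) [Fintype α] [DecidableEq α] : (α → Bool) ≃ Finset α where
  toFun f := univ.filter fun i => f i = true
  invFun S i := decide (i ∈ S)
  left_inv f := by funext i; simp
  right_inv S := by ext i; simp

lemma sum_bool_fun_card_true {α M : Type*} [Fintype α] [DecidableEq α] [AddCommMonoid M]
    (F : ℕ → M) :
    ∑ f : α → Bool, F (univ.filter fun i => f i = true).card
      = ∑ m ∈ range (Fintype.card α + 1), (Fintype.card α).choose m • F m := by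
  rw [← Finset.card_univ, ← Finset.sum_powerset_apply_card, Finset.powerset_univ]
  exact Fintype.sum_equiv (boolFunEquivFinset α) _ _ fun f => rfl

lemma card_filter_false {α : Type*} [Fintype α] (f : α → Bool) :
    (univ.filter fun i => f i = false).card
      = Fintype.card α - (univ.filter fun i => f i = true).card := by
  have := Finset.card_filter_add_card_filter_not (s := univ) (p := fun i => f i = true)
  simp only [Bool.not_eq_true, Finset.card_univ] at this
  omega

lemma arr_eq_sum_choose (z x y r s t : ℕ) :
    Arr z x y r s t = ∑ a ∈ range (z + 1), ∑ b ∈ range (x + 1), ∑ c ∈ range (y + 1),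
      (z.choose a : ℤ) * x.choose b * y.choose c *
        if a + b = r ∧ z - a + c = s ∧ b + c = t then (-1 : ℤ) ^ (a + (x - b) + (y - c))
        else 0 := by
  let G : ℕ → ℕ → ℕ → ℤ := fun a b c =>
    if a + b = r ∧ z - a + c = s ∧ b + c = t then (-1 : ℤ) ^ (a + (x - b) + (y - c)) else 0
  have hArr : Arr z x y r s t = ∑ f : Fin z → Bool, ∑ g : Fin x → Bool, ∑ h : Fin y → Bool,
      G (univ.filter fun i => f i = true).card (univ.filter fun i => g i = true).card
        (univ.filter fun i => h i = true).card := by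
    simp only [Arr, G, card_filter_false, Fintype.card_fin, Fintype.sum_prod_type]
  rw [hArr, sum_bool_fun_card_true (fun a => ∑ g : Fin x → Bool, ∑ h : Fin y → Bool,
    G a (univ.filter fun i => g i = true).card (univ.filter fun i => h i = true).card)]
  refine Finset.sum_congr (by rw [Fintype.card_fin]) fun a _ => ?_
  rw [sum_bool_fun_card_true (fun b => ∑ h : Fin y → Bool,
    G a b (univ.filter fun i => h i = true).card), Finset.smul_sum]
  refine Finset.sum_congr (by rw [Fintype.card_fin]) fun b _ => ?_
  rw [sum_bool_fun_card_true (G a b), Finset.smul_sum, Finset.smul_sum]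
  refine Finset.sum_congr (by rw [Fintype.card_fin]) fun c _ => ?_
  simp only [Fintype.card_fin, nsmul_eq_mul, G]
  ring

lemma arr_summand_eq_ite_mul_ite {z x y r s t a b c : ℕ} (ht : t + z = r + s)
    (ha : a ≤ z) (hb : b ≤ x) (hc : c ≤ y) :
    (z.choose a : ℤ) * x.choose b * y.choose c *
        (if a + b = r ∧ z - a + c = s ∧ b + c = t then (-1 : ℤ) ^ (a + (x - b) + (y - c))
        else 0)
      = (if (b : ℤ) = r - a then (x.choose b : ℤ) else 0)
        * (if (c : ℤ) = s + a - z then (y.choose c : ℤ) else 0)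
        * ((-1 : ℤ) ^ (x + y + z + r + s) * ((-1) ^ a * z.choose a)) := by
  by_cases hb' : (b : ℤ) = r - a
  · by_cases hc' : (c : ℤ) = s + a - z
    · have hsign : (-1 : ℤ) ^ (a + (x - b) + (y - c)) = (-1) ^ (x + y + z + r + s + a) :=
        neg_one_pow_congr (by rw [Nat.even_iff, Nat.even_iff]; omega)
      rw [if_pos (by omega), if_pos hb', if_pos hc', hsign, pow_add]
      ring
    · rw [if_neg (by omega), if_neg hc']
      ring
  · rw [if_neg (by omega), if_neg hb']
    ring

/-- **The classical `3j`-symbol counts signed line arrangements** (Theorem 2.2(i)):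
`Arr^{i,j,k}_{r,s,t} = (-1)^{(i+j+k)/2 + r + s} ∑_{a=0}^{z} (-1)^a C(z,a) C(x,r-a) C(y,j-s-a)`
where `z = (i+j-k)/2`, `x = (i+k-j)/2`, `y = (j+k-i)/2`. -/
theorem arr_eq_signed_binomial_sum (i j k r s t : ℕ)
    (heven : Even (i + j + k)) (h1 : j ≤ i + k) (h2 : i ≤ j + k) (h3 : k ≤ i + j)
    (ht : t + (i + j - k) / 2 = r + s) :
    Arr ((i + j - k) / 2) ((i + k - j) / 2) ((j + k - i) / 2) r s t =
      (-1 : ℤ) ^ ((i + j + k) / 2 + r + s) *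
        ∑ a ∈ Finset.range ((i + j - k) / 2 + 1),
          (-1 : ℤ) ^ a * (((i + j - k) / 2).choose a : ℤ) *
            zchoose ((i + k - j) / 2) ((r : ℤ) - a) *
            zchoose ((j + k - i) / 2) ((j : ℤ) - s - a) := by
  have he : (i + j + k) % 2 = 0 := Nat.even_iff.mp heven
  set z := (i + j - k) / 2
  set x := (i + k - j) / 2
  set y := (j + k - i) / 2
  have hsum : (i + j + k) / 2 = x + y + z := by omega
  rw [arr_eq_sum_choose, hsum, Finset.mul_sum]
  refine Finset.sum_congr rfl fun a ha => ?_
  calc _ = ∑ b ∈ range (x + 1), ∑ c ∈ range (y + 1),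
          (if (b : ℤ) = r - a then (x.choose b : ℤ) else 0)
            * (if (c : ℤ) = s + a - z then (y.choose c : ℤ) else 0)
            * ((-1 : ℤ) ^ (x + y + z + r + s) * ((-1) ^ a * z.choose a)) :=
        Finset.sum_congr rfl fun b hb => Finset.sum_congr rfl fun c hc =>
          arr_summand_eq_ite_mul_ite ht (by rw [mem_range] at ha; omega)
            (by rw [mem_range] at hb; omega) (by rw [mem_range] at hc; omega)
    _ = zchoose x (r - a) * zchoose y (s + a - z)
          * ((-1 : ℤ) ^ (x + y + z + r + s) * ((-1) ^ a * z.choose a)) := by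
        rw [← sum_range_ite_cast_eq_zchoose, ← sum_range_ite_cast_eq_zchoose, Finset.sum_mul_sum,
          Finset.sum_mul]
        simp only [Finset.sum_mul]
    _ = _ := by
        rw [show (j : ℤ) - s - a = y - (s + a - z) by omega, zchoose_symm]
        ring
end

section
/- For all integers r ≥ 0 and n ≥ 0, the alternating sum ∑_{m=1}^{n+1} (−1)^{m+1} · a^{r}_{n+1−m, m} equals (−1)^{n} · C(r + n + 1, n + 1). -/
open Finset

/-- The numbers `a^r_{n,m}` of Lemma 12.4:
`a^r_{n,m} = ∑ ∏_{p=1}^{m} C(r + m + n - d_1 - ⋯ - d_{p-1}, d_p)`, the sum ranging over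
all `m`-tuples `(d_1,…,d_m)` of positive integers with `d_1 + ⋯ + d_m = m + n`
(for `m = 0` this gives `1` if `n = 0` and `0` otherwise). -/
def aNum (r n m : ℕ) : ℕ :=
  ∑ d ∈ (Finset.Nat.antidiagonalTuple m (m + n)).filter (fun d => ∀ p, 1 ≤ d p),
    ∏ p : Fin m,
      Nat.choose (r + m + n - ∑ q ∈ Finset.univ.filter (· < p), d q) (d p)

/-! Write `b(m, N) = a^r_{N-m,m}`. Peeling off the first part `d_1 = k` of a composition
gives `b(m+1, N) = ∑_{k=1}^N C(r+N, k) b(m, N-k)`, so `T(N) = ∑_m (-1)^m b(m, N)` solves the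
unitriangular system `∑_{k=0}^N C(r+N, k) T(N-k) = [N = 0]`. So does `(-1)^N C(r+N, N)`, because
`C(r+N, N-j) C(r+j, j) = C(r+N, N) C(N, j)` and alternating sums of binomial coefficients vanish.
The alternating sum of the theorem is `-T(n+1)`. -/

lemma sum_range_succ_eq_add_sum_Icc_one {M : Type*} [AddCommMonoid M] (f : ℕ → M) (N : ℕ) :
    ∑ k ∈ range (N + 1), f k = f 0 + ∑ k ∈ Icc 1 N, f k := by
  rw [range_eq_Ico, sum_eq_sum_Ico_succ_bot N.add_one_pos, zero_add, Ico_add_one_right_eq_Icc]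

def posAntidiagonalTuple (m N : ℕ) : Finset (Fin m → ℕ) :=
  (Nat.antidiagonalTuple m N).filter fun d => ∀ p, 1 ≤ d p

lemma sum_posAntidiagonalTuple_succ {M : Type*} [AddCommMonoid M] (m N : ℕ)
    (f : (Fin (m + 1) → ℕ) → M) :
    ∑ d ∈ posAntidiagonalTuple (m + 1) N, f d =
      ∑ k ∈ Icc 1 N, ∑ e ∈ posAntidiagonalTuple m (N - k), f (Fin.cons k e) := by
  rw [sum_sigma']
  refine (sum_equiv ((Equiv.sigmaEquivProd ℕ _).trans (Fin.consEquiv fun _ => ℕ)) ?_ ?_).symm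
  · rintro ⟨k, e⟩
    simp [posAntidiagonalTuple, Nat.mem_antidiagonalTuple, Fin.forall_fin_succ, Fin.sum_univ_succ,
      Fin.consEquiv]
    grind
  · simp [Fin.consEquiv]

lemma sum_filter_lt_succ_cons {M : Type*} [AddCommMonoid M] {m : ℕ} (a : M) (e : Fin m → M)
    (p : Fin m) :
    ∑ q ∈ univ.filter (· < p.succ), (Fin.cons a e : Fin (m + 1) → M) q =
      a + ∑ q ∈ univ.filter (· < p), e q := by
  simp [sum_filter, Fin.sum_univ_succ, Fin.succ_lt_succ_iff, Fin.succ_pos]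

lemma prod_choose_sub_sum_filter_lt_cons {m : ℕ} (t k : ℕ) (e : Fin m → ℕ) :
    ∏ p : Fin (m + 1),
        (t - ∑ q ∈ univ.filter (· < p), (Fin.cons k e : Fin (m + 1) → ℕ) q).choose
          ((Fin.cons k e : Fin (m + 1) → ℕ) p) =
      t.choose k * ∏ p : Fin m, (t - k - ∑ q ∈ univ.filter (· < p), e q).choose (e p) := by
  simp [Fin.prod_univ_succ, sum_filter_lt_succ_cons, Nat.sub_add_eq]

def compositionSum (r : ℕ) : ℕ → ℕ → ℕ
  | 0, N => if N = 0 then 1 else 0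
  | m + 1, N => ∑ k ∈ Icc 1 N, (r + N).choose k * compositionSum r m (N - k)

lemma compositionSum_eq_zero_of_lt (r : ℕ) {m N : ℕ} (h : N < m) :
    compositionSum r m N = 0 := by
  induction m generalizing N with
  | zero => omega
  | succ m ih =>
    refine sum_eq_zero fun k hk => ?_
    rw [ih (by grind), mul_zero]

lemma compositionSum_eq_sum_prod (r m N : ℕ) :
    compositionSum r m N = ∑ d ∈ posAntidiagonalTuple m N,
      ∏ p : Fin m, (r + N - ∑ q ∈ univ.filter (· < p), d q).choose (d p) := by
  induction m generalizing N with
  | zero =>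
    cases N <;> simp [compositionSum, posAntidiagonalTuple, Nat.antidiagonalTuple_zero_zero,
      Nat.antidiagonalTuple_zero_succ]
  | succ m ih =>
    rw [compositionSum, sum_posAntidiagonalTuple_succ]
    refine sum_congr rfl fun k hk => ?_
    rw [ih, mul_sum, ← Nat.add_sub_assoc (mem_Icc.mp hk).2]
    simp only [prod_choose_sub_sum_filter_lt_cons]

lemma aNum_eq_compositionSum (r n m : ℕ) : aNum r n m = compositionSum r m (m + n) := by
  rw [compositionSum_eq_sum_prod, ← add_assoc]
  rfl

def altCompositionSum (r N : ℕ) : ℤ :=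
  ∑ m ∈ range (N + 1), (-1) ^ m * (compositionSum r m N : ℤ)

lemma sum_range_eq_altCompositionSum (r : ℕ) {N M : ℕ} (h : N < M) :
    ∑ m ∈ range M, (-1) ^ m * (compositionSum r m N : ℤ) = altCompositionSum r N := by
  refine (sum_subset (range_subset_range.mpr h) fun m hm hm' => ?_).symm
  rw [compositionSum_eq_zero_of_lt r (by simp_all), Nat.cast_zero, mul_zero]

lemma sum_choose_mul_altCompositionSum (r N : ℕ) :
    ∑ k ∈ range (N + 1), ((r + N).choose k : ℤ) * altCompositionSum r (N - k) =
      if N = 0 then 1 else 0 := by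
  have hsucc : ∑ m ∈ range N, (-1) ^ (m + 1) * (compositionSum r (m + 1) N : ℤ) =
      -∑ k ∈ Icc 1 N, ((r + N).choose k : ℤ) * altCompositionSum r (N - k) := by
    simp only [compositionSum, Nat.cast_sum, Nat.cast_mul, mul_sum]
    rw [sum_comm, ← sum_neg_distrib]
    refine sum_congr rfl fun k hk => ?_
    rw [← sum_range_eq_altCompositionSum r (M := N) (by grind), mul_sum, ← sum_neg_distrib]
    exact sum_congr rfl fun m _ => by ring
  rw [sum_range_succ_eq_add_sum_Icc_one, Nat.sub_zero, Nat.choose_zero_right, Nat.cast_one,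
    one_mul, altCompositionSum, sum_range_succ', hsucc]
  simp [compositionSum]

lemma sum_choose_mul_neg_one_pow_choose (r N : ℕ) :
    ∑ k ∈ range (N + 1),
        ((r + N).choose k : ℤ) * ((-1) ^ (N - k) * (r + (N - k)).choose (N - k)) =
      if N = 0 then 1 else 0 := by
  rw [← sum_range_reflect]
  calc _ = ∑ j ∈ range (N + 1), ((r + N).choose N : ℤ) * ((-1) ^ j * N.choose j) := by
        refine sum_congr rfl fun j hj => ?_
        have hj : j ≤ N := Nat.lt_succ_iff.mp (mem_range.mp hj)
        have hchoose :
            ((r + N).choose (N - j) : ℤ) * (r + j).choose j = (r + N).choose N * N.choose j := by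
          have := Nat.choose_mul (n := r + N) (Nat.sub_le N j)
          rw [Nat.choose_symm hj, Nat.sub_sub_self hj,
            show r + N - (N - j) = r + j by omega] at this
          exact_mod_cast this.symm
        rw [Nat.add_sub_cancel, Nat.sub_sub_self hj]
        linear_combination (-1) ^ j * hchoose
    _ = if N = 0 then 1 else 0 := by
        rw [← mul_sum, Int.alternating_sum_range_choose]
        split_ifs with h <;> simp [h]

lemma eq_of_sum_range_mul_sub_eq {R : Type*} [Ring R] {c : ℕ → ℕ → R}
    (hc : ∀ N, c N 0 = 1) {f g : ℕ → R}
    (h : ∀ N, ∑ k ∈ range (N + 1), c N k * f (N - k) =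
      ∑ k ∈ range (N + 1), c N k * g (N - k)) :
    f = g := by
  funext N
  induction N using Nat.strong_induction_on with
  | _ N ih =>
    have hN := h N
    rw [sum_range_succ', sum_range_succ', hc, sum_congr rfl fun k hk =>
      by rw [ih (N - (k + 1)) (by grind)]] at hN
    simpa using hN

lemma altCompositionSum_eq (r N : ℕ) :
    altCompositionSum r N = (-1) ^ N * (r + N).choose N := by
  have := eq_of_sum_range_mul_sub_eq (c := fun N k => ((r + N).choose k : ℤ)) (by simp)
    (f := altCompositionSum r) (g := fun j => (-1) ^ j * (r + j).choose j)
    fun N => by rw [sum_choose_mul_altCompositionSum, sum_choose_mul_neg_one_pow_choose]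
  exact congrFun this N

/-- **Lemma 12.4(1)**: the alternating sum
`∑_{m=1}^{n+1} (-1)^{m+1} a^r_{n+1-m,m}` equals `(-1)^n C(r+n+1, n+1)`. -/
theorem aNum_alternating_sum (r n : ℕ) :
    ∑ m ∈ Finset.Icc 1 (n + 1), (-1 : ℤ) ^ (m + 1) * (aNum r (n + 1 - m) m : ℤ) =
      (-1 : ℤ) ^ n * ((r + n + 1).choose (n + 1) : ℤ) := by
  calc _ = -∑ m ∈ Icc 1 (n + 1), (-1) ^ m * (compositionSum r m (n + 1) : ℤ) := by
        rw [← sum_neg_distrib]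
        refine sum_congr rfl fun m hm => ?_
        rw [aNum_eq_compositionSum, Nat.add_sub_cancel' (mem_Icc.mp hm).2, pow_succ]
        ring
    _ = -altCompositionSum r (n + 1) := by
        rw [altCompositionSum, sum_range_succ_eq_add_sum_Icc_one]
        simp [compositionSum]
    _ = _ := by
        rw [altCompositionSum_eq, pow_succ, ← add_assoc]
        ring
end

section
/- For all integers r ≥ 0, n ≥ 0 and m ≥ 1, the numbers a satisfy the recursion a^{r}_{n,m} = ∑_{γ=0}^{n} C(r + γ + 1, γ + 1) · a^{r+γ+1}_{n−γ, m−1}. -/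
open Finset

def posTuples (m s : ℕ) : Finset (Fin m → ℕ) :=
  (Nat.antidiagonalTuple m s).filter (fun d => ∀ p, 1 ≤ d p)

@[simp]
lemma mem_posTuples {m s : ℕ} {d : Fin m → ℕ} :
    d ∈ posTuples m s ↔ ∑ i, d i = s ∧ ∀ i, 1 ≤ d i := by
  simp [posTuples, Finset.Nat.mem_antidiagonalTuple]

lemma le_of_mem_posTuples {m s : ℕ} {d : Fin m → ℕ} (hd : d ∈ posTuples m s) : m ≤ s := by
  obtain ⟨rfl, hpos⟩ := mem_posTuples.1 hd
  simpa using sum_le_sum fun i (_ : i ∈ univ) => hpos i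

lemma snoc_mem_posTuples_iff {k s c : ℕ} {e : Fin k → ℕ} :
    Fin.snoc e c ∈ posTuples (k + 1) s ↔ e ∈ posTuples k (s - c) ∧ 1 ≤ c ∧ c ≤ s := by
  simp only [mem_posTuples, Fin.sum_univ_castSucc, Fin.snoc_castSucc, Fin.snoc_last,
    Fin.forall_fin_succ']
  constructor
  · rintro ⟨hsum, hpos, hc⟩
    exact ⟨⟨by omega, hpos⟩, hc, by omega⟩
  · rintro ⟨⟨hsum, hpos⟩, hc, hcs⟩
    exact ⟨by omega, hpos, hc⟩

lemma sum_posTuples_succ {M : Type*} [AddCommMonoid M] (k n : ℕ)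
    (f : (Fin (k + 1) → ℕ) → M) :
    ∑ d ∈ posTuples (k + 1) (k + 1 + n), f d =
      ∑ γ ∈ range (n + 1), ∑ e ∈ posTuples k (k + (n - γ)), f (Fin.snoc e (γ + 1)) := by
  rw [sum_sigma']
  refine sum_bij' (fun d _ => ⟨d (Fin.last k) - 1, Fin.init d⟩)
    (fun x _ => Fin.snoc x.2 (x.1 + 1)) (fun d hd => ?_) (fun x hx => ?_)
    (fun d hd => ?_) (fun x _ => ?_) (fun d hd => ?_)
  · rw [← Fin.snoc_init_self d, snoc_mem_posTuples_iff] at hd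
    have := le_of_mem_posTuples hd.1
    simp only [mem_sigma, mem_range]
    refine ⟨by omega, ?_⟩
    convert hd.1 using 2
    omega
  · simp only [mem_sigma, mem_range] at hx
    rw [snoc_mem_posTuples_iff]
    refine ⟨?_, by omega, by omega⟩
    convert hx.2 using 2
    omega
  · rw [← Fin.snoc_init_self d, snoc_mem_posTuples_iff] at hd
    simp only [Nat.sub_add_cancel hd.2.1, Fin.snoc_init_self]
  · simp [Fin.init_snoc]
  · simp only [Nat.sub_add_cancel ((mem_posTuples.1 hd).2 _), Fin.snoc_init_self]

def chooseProd {m : ℕ} (T : ℕ) (d : Fin m → ℕ) : ℕ :=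
  ∏ p, (T - ∑ q ∈ univ.filter (· < p), d q).choose (d p)

lemma chooseProd_snoc {k : ℕ} (T c : ℕ) (e : Fin k → ℕ) :
    chooseProd T (Fin.snoc e c) = chooseProd T e * (T - ∑ i, e i).choose c := by
  have hlast : ∑ q ∈ univ.filter (· < Fin.last k), (Fin.snoc e c : Fin (k + 1) → ℕ) q =
      ∑ i, e i := by
    simp [sum_filter, Fin.sum_univ_castSucc, Fin.castSucc_lt_last]
  have hcast (p : Fin k) :
      ∑ q ∈ univ.filter (· < p.castSucc), (Fin.snoc e c : Fin (k + 1) → ℕ) q =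
        ∑ q ∈ univ.filter (· < p), e q := by
    simp [sum_filter, Fin.sum_univ_castSucc, (Fin.castSucc_lt_last p).not_gt]
  simp only [chooseProd, Fin.prod_univ_castSucc, hlast, hcast, Fin.snoc_castSucc, Fin.snoc_last]

lemma aNum_eq_sum_chooseProd (r n m : ℕ) :
    aNum r n m = ∑ d ∈ posTuples m (m + n), chooseProd (r + m + n) d :=
  rfl

/-- **Lemma 12.5**: the recursion
`a^r_{n,m} = ∑_{γ=0}^{n} C(r+γ+1, γ+1) a^{r+γ+1}_{n-γ, m-1}` for `m ≥ 1`. -/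
theorem aNum_recursion (r n m : ℕ) (hm : 1 ≤ m) :
    aNum r n m =
      ∑ γ ∈ Finset.range (n + 1),
        (r + γ + 1).choose (γ + 1) * aNum (r + γ + 1) (n - γ) (m - 1) := by
  obtain ⟨k, rfl⟩ : ∃ k, m = k + 1 := ⟨m - 1, by omega⟩
  rw [aNum_eq_sum_chooseProd, sum_posTuples_succ]
  refine sum_congr rfl fun γ hγ => ?_
  rw [Nat.add_sub_cancel, aNum_eq_sum_chooseProd, mul_sum]
  refine sum_congr rfl fun e he => ?_
  have hγ : γ ≤ n := Nat.lt_succ_iff.1 (mem_range.1 hγ)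
  rw [chooseProd_snoc, (mem_posTuples.1 he).1, mul_comm,
    show r + (k + 1) + n - (k + (n - γ)) = r + γ + 1 by omega,
    show r + γ + 1 + k + (n - γ) = r + (k + 1) + n by omega]
end

section
/- For all integers r ≥ 0, n ≥ 0 and 1 ≤ m ≤ n + 1, one has a^{r}_{n+1−m, m} = C(r + n + 1, n + 1) · ∑ (n+1)!/(d_1! ⋯ d_m!), where the sum ranges over all m-tuples (d_1, …, d_m) of positive integers with d_1 + ⋯ + d_m = n + 1. -/
/-!
Splitting off the first factor, `∏_p C(N - d₁ - ⋯ - d_{p-1}, d_p)` is `C(N, d₁)` times the same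
product for the tail `(d₂, …, d_m)` and `N - d₁`. Since
`C(N, d₁) C(N - d₁, s) = C(N, d₁ + s) C(d₁ + s, d₁)`, induction on `m` shows that the product
equals `C(N, d₁ + ⋯ + d_m)` times the multinomial coefficient of `d`, for all `N` and `d`.
In `a^r_{n+1-m,m}` one has `N = r + n + 1` and `d₁ + ⋯ + d_m = n + 1`.
-/

open Finset

lemma Fin.sum_filter_lt_succ {M : Type*} [AddCommMonoid M] {m : ℕ} (d : Fin (m + 1) → M)
    (i : Fin m) :
    ∑ q ∈ univ.filter (· < i.succ), d q = d 0 + ∑ q ∈ univ.filter (· < i), d q.succ := by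
  simp [sum_filter, Fin.sum_univ_succ, Fin.succ_pos]

lemma Nat.multinomial_univ_fin_succ {m : ℕ} (d : Fin (m + 1) → ℕ) :
    Nat.multinomial univ d =
      (∑ p, d p).choose (d 0) * Nat.multinomial univ (fun p : Fin m => d p.succ) := by
  rw [Fin.univ_succ, Nat.multinomial_cons, sum_cons, sum_map]
  simp [Nat.multinomial, prod_map, sum_map]

theorem Nat.prod_choose_sub_sum_lt {m : ℕ} (N : ℕ) (d : Fin m → ℕ) :
    ∏ p, (N - ∑ q ∈ univ.filter (· < p), d q).choose (d p) =
      N.choose (∑ p, d p) * Nat.multinomial univ d := by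
  induction m generalizing N with
  | zero => simp
  | succ m ih =>
    simp only [Fin.prod_univ_succ, Fin.sum_filter_lt_succ, ← Nat.sub_sub, ih,
      Nat.multinomial_univ_fin_succ, Fin.sum_univ_succ, Fin.not_lt_zero, filter_false, sum_empty,
      Nat.sub_zero]
    rw [← mul_assoc, ← mul_assoc, Nat.choose_mul (Nat.le_add_right _ _), Nat.add_sub_cancel_left]

theorem aNum_eq_choose_mul_multinomial_sum_general (r n m : ℕ) (hm2 : m ≤ n + 1) :
    aNum r (n + 1 - m) m =
      (r + n + 1).choose (n + 1) *
        ∑ d ∈ (Finset.Nat.antidiagonalTuple m (n + 1)).filter (fun d => ∀ p, 1 ≤ d p),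
          Nat.multinomial Finset.univ d := by
  have hmn : m + (n + 1 - m) = n + 1 := by omega
  have hrmn : r + m + (n + 1 - m) = r + n + 1 := by omega
  rw [aNum, hmn, hrmn, mul_sum]
  refine sum_congr rfl fun d hd => ?_
  rw [Nat.prod_choose_sub_sum_lt, Nat.mem_antidiagonalTuple.mp (mem_filter.mp hd).1]

/-- **Equation (12.2)**: for `1 ≤ m ≤ n + 1`,
`a^r_{n+1-m, m} = C(r+n+1, n+1) ∑ (n+1)!/(d_1! ⋯ d_m!)`, the sum ranging over all
`m`-tuples `(d_1,…,d_m)` of positive integers with `d_1 + ⋯ + d_m = n + 1`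
(the multinomial coefficient `(n+1)!/(d_1!⋯d_m!)` is `Nat.multinomial`). -/
theorem aNum_eq_choose_mul_multinomial_sum (r n m : ℕ) (hm1 : 1 ≤ m) (hm2 : m ≤ n + 1) :
    aNum r (n + 1 - m) m =
      (r + n + 1).choose (n + 1) *
        ∑ d ∈ (Finset.Nat.antidiagonalTuple m (n + 1)).filter (fun d => ∀ p, 1 ≤ d p),
          Nat.multinomial Finset.univ d :=
  aNum_eq_choose_mul_multinomial_sum_general r n m hm2
end
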